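/- Fix an integer n ≥ 1. Let Ω ⊂ ℝⁿ be a bounded connected open set with C² boundary, let δ > 0, and let φ : ℝⁿ ∖ Ω → ℝ be continuous with compact support satisfying φ ≥ 0 and supp φ ⊂ {x ∈ ℝⁿ : dist(x,Ω) ≥ δ}. Then there exists s̃ ∈ (0,1) such that, for every s ∈ (0, s̃), every s-minimal function u_s in Ω with u_s = φ a.e. in ℝⁿ ∖ Ω satisfies u_s = 0 a.e. in Ω. -/

import Mathlib

/-! Test minimality against the competitor that vanishes in `Ω`. The `Ω × Ω` part of the
energy can only drop, so by symmetry of the kernel minimality yields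
`∫_Ω |u(x)| (K_far(x) - K_near(x)) dx ≤ 0`, where `K_far(x)` is the kernel mass of the part of
`𝒞Ω` on which `φ = 0` and `K_near(x)` that of `supp φ` (there one only uses
`|u(y)| ≤ |u(x) - u(y)| + |u(x)|`). Since `supp φ` stays at distance `δ` from `Ω`, `K_near` is
bounded uniformly in `s`, whereas the set where `φ = 0` contains the complement of a ball of
fixed radius `R` around every `x ∈ Ω`, so that `K_far(x) ≥ c R^{-s} / s → ∞` as `s → 0`. Hence
for small `s` the weight is positive and `u = 0` in `Ω`. -/

open MeasureTheory Filter
open scoped ENNReal NNReal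

noncomputable section

/-- The fractional kernel `|x - y| ^ (-n - s)`. -/
def fracKernel (n : ℕ) (s : ℝ) (x y : EuclideanSpace ℝ (Fin n)) : ℝ :=
  dist x y ^ (-(n : ℝ) - s)

/-- The cross-shaped domain `Q(Ω) = (ℝⁿ × ℝⁿ) \ (𝒞Ω × 𝒞Ω)`. -/
def crossQ (n : ℕ) (Ω : Set (EuclideanSpace ℝ (Fin n))) :
    Set (EuclideanSpace ℝ (Fin n) × EuclideanSpace ℝ (Fin n)) :=
  (Ωᶜ ×ˢ Ωᶜ)ᶜ

/-- Membership in `𝒲^{s,1}(Ω)`: a measurable function with finite Gagliardo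
`W^{s,1}`-seminorm in `Ω`. -/
def MemW (n : ℕ) (s : ℝ) (Ω : Set (EuclideanSpace ℝ (Fin n)))
    (u : EuclideanSpace ℝ (Fin n) → ℝ) : Prop :=
  Measurable u ∧
    ∫⁻ p in Ω ×ˢ Ω, ENNReal.ofReal (|u p.1 - u p.2| * fracKernel n s p.1 p.2) < ⊤

/-- `u` is an `s`-minimal function in `Ω`: for every competitor `v ∈ 𝒲^{s,1}(Ω)` that
agrees with `u` a.e. in `𝒞Ω`, the comparison integrand is integrable on `Q(Ω)` and its
integral is nonpositive. -/
def SMinimal (n : ℕ) (s : ℝ) (Ω : Set (EuclideanSpace ℝ (Fin n)))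
    (u : EuclideanSpace ℝ (Fin n) → ℝ) : Prop :=
  MemW n s Ω u ∧
    ∀ v : EuclideanSpace ℝ (Fin n) → ℝ, MemW n s Ω v →
      (∀ᵐ x ∂(volume.restrict Ωᶜ), v x = u x) →
      IntegrableOn
        (fun p => (|u p.1 - u p.2| - |v p.1 - v p.2|) * fracKernel n s p.1 p.2)
        (crossQ n Ω) volume ∧
      ∫ p in crossQ n Ω, (|u p.1 - u p.2| - |v p.1 - v p.2|) * fracKernel n s p.1 p.2 ≤ 0

/-- `Ω` has a boundary which is locally, up to a rigid motion of `ℝⁿ`, the open region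
strictly above the graph of a function `ℝ^{n-1} → ℝ` satisfying the property `P`. -/
def HasGraphBoundary (n : ℕ) (hn : 0 < n)
    (P : (EuclideanSpace ℝ (Fin (n - 1)) → ℝ) → Prop)
    (Ω : Set (EuclideanSpace ℝ (Fin n))) : Prop :=
  ∀ x ∈ frontier Ω, ∃ U : Set (EuclideanSpace ℝ (Fin n)), IsOpen U ∧ x ∈ U ∧
    ∃ σ : EuclideanSpace ℝ (Fin n) ≃ᵢ EuclideanSpace ℝ (Fin n),
    ∃ f : EuclideanSpace ℝ (Fin (n - 1)) → ℝ, P f ∧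
      ∀ y ∈ U, (y ∈ Ω ↔
        f (WithLp.toLp 2 (fun i => σ y (Fin.castLE (Nat.sub_le n 1) i))) < σ y ⟨n - 1, Nat.sub_lt hn Nat.one_pos⟩)

/-- `Ω` has boundary of class `C²`. -/
def HasC2Boundary (n : ℕ) (hn : 0 < n) (Ω : Set (EuclideanSpace ℝ (Fin n))) : Prop :=
  HasGraphBoundary n hn (fun f => ContDiff ℝ 2 f) Ω

lemma fracKernel_nonneg (n : ℕ) (s : ℝ) (x y : EuclideanSpace ℝ (Fin n)) :
    0 ≤ fracKernel n s x y :=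
  Real.rpow_nonneg dist_nonneg _

lemma fracKernel_comm (n : ℕ) (s : ℝ) (x y : EuclideanSpace ℝ (Fin n)) :
    fracKernel n s x y = fracKernel n s y x := by
  rw [fracKernel, fracKernel, dist_comm]

lemma measurable_fracKernel (n : ℕ) (s : ℝ) :
    Measurable fun p : EuclideanSpace ℝ (Fin n) × EuclideanSpace ℝ (Fin n) =>
      fracKernel n s p.1 p.2 :=
  (measurable_fst.dist measurable_snd).pow_const _

lemma fracKernel_le_of_le_dist {n : ℕ} {s δ : ℝ} (hs0 : 0 ≤ s) (hs1 : s ≤ 1) (hδ : 0 < δ)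
    (hδ1 : δ ≤ 1) {x y : EuclideanSpace ℝ (Fin n)} (h : δ ≤ dist x y) :
    fracKernel n s x y ≤ δ ^ (-(n : ℝ) - 1) :=
  calc dist x y ^ (-(n : ℝ) - s) ≤ δ ^ (-(n : ℝ) - s) :=
        Real.rpow_le_rpow_of_nonpos hδ h (by linarith [(n.cast_nonneg : (0 : ℝ) ≤ n)])
    _ ≤ δ ^ (-(n : ℝ) - 1) := Real.rpow_le_rpow_of_exponent_ge hδ hδ1 (by linarith)

section Tail

variable {E : Type*} [NormedAddCommGroup E] [NormedSpace ℝ E] [FiniteDimensional ℝ E]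
  [MeasurableSpace E] [BorelSpace E] [Nontrivial E] (μ : Measure E) [μ.IsAddHaarMeasure]

lemma pow_mul_indicator_Ioi_rpow {d : ℕ} (hd : 0 < d) {R s r : ℝ} (hr : 0 < r) :
    r ^ (d - 1) * (Set.Ioi R).indicator (fun t => t ^ (-(d : ℝ) - s)) r
      = (Set.Ioi R).indicator (fun t => t ^ (-1 - s)) r := by
  by_cases hrR : r ∈ Set.Ioi R
  · rw [Set.indicator_of_mem hrR, Set.indicator_of_mem hrR, ← Real.rpow_natCast,
      ← Real.rpow_add hr, Nat.cast_sub hd]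
    ring_nf
  · simp [hrR]

theorem lintegral_norm_rpow_tail {R s : ℝ} (hR : 0 < R) (hs : 0 < s) :
    ∫⁻ z in {z : E | R < ‖z‖}, ENNReal.ofReal (‖z‖ ^ (-(Module.finrank ℝ E : ℝ) - s)) ∂μ
      = ENNReal.ofReal (Module.finrank ℝ E * μ.real (Metric.ball 0 1) * (R ^ (-s) / s)) := by
  set d := Module.finrank ℝ E
  set g : ℝ → ℝ := (Set.Ioi R).indicator (fun t => t ^ (-(d : ℝ) - s))
  have hradial : Set.EqOn (fun r => r ^ (d - 1) • g r)
      ((Set.Ioi R).indicator (fun t => t ^ (-1 - s))) (Set.Ioi 0) :=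
    fun r hr => pow_mul_indicator_Ioi_rpow Module.finrank_pos hr
  have hIoi : Set.Ioi (0 : ℝ) ∩ Set.Ioi R = Set.Ioi R :=
    Set.Ioi_inter_Ioi.trans (by rw [max_eq_right hR.le])
  have hint : Integrable (fun z : E => g ‖z‖) μ := by
    rw [integrable_fun_norm_addHaar, integrableOn_congr_fun hradial measurableSet_Ioi,
      integrableOn_indicator_iff measurableSet_Ioi, Set.inter_comm, hIoi]
    exact integrableOn_Ioi_rpow_of_lt (by linarith) hR
  have hg : 0 ≤ᵐ[μ] fun z => g ‖z‖ := ae_of_all _ fun z =>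
    Set.indicator_nonneg (fun t ht => Real.rpow_nonneg (hR.trans ht).le _) _
  calc ∫⁻ z in {z : E | R < ‖z‖}, ENNReal.ofReal (‖z‖ ^ (-(d : ℝ) - s)) ∂μ
      = ∫⁻ z, ENNReal.ofReal (g ‖z‖) ∂μ := by
        rw [← lintegral_indicator (measurableSet_lt measurable_const measurable_norm)]
        congr 1 with z
        by_cases hz : R < ‖z‖ <;> simp [g, hz]
    _ = ENNReal.ofReal (∫ z, g ‖z‖ ∂μ) := (ofReal_integral_eq_lintegral_ofReal hint hg).symm
    _ = _ := by
      rw [integral_fun_norm_addHaar, setIntegral_congr_fun measurableSet_Ioi hradial,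
        setIntegral_indicator measurableSet_Ioi, hIoi,
        integral_Ioi_rpow_of_lt (by linarith) hR]
      simp only [nsmul_eq_mul, smul_eq_mul, d]
      ring_nf

end Tail

lemma lintegral_fracKernel_tail {n : ℕ} (hn : 0 < n) {s R : ℝ} (hs : 0 < s) (hR : 0 < R)
    (x : EuclideanSpace ℝ (Fin n)) :
    ∫⁻ y in {y | R < dist x y}, ENNReal.ofReal (fracKernel n s x y)
      = ENNReal.ofReal (n * volume.real (Metric.ball (0 : EuclideanSpace ℝ (Fin n)) 1)
          * (R ^ (-s) / s)) := by
  have : Nonempty (Fin n) := ⟨⟨0, hn⟩⟩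
  have htail := lintegral_norm_rpow_tail (volume : Measure (EuclideanSpace ℝ (Fin n))) hR hs
  rw [finrank_euclideanSpace_fin] at htail
  rw [← htail, ← lintegral_indicator (measurableSet_lt measurable_const (by fun_prop)),
    ← lintegral_indicator (measurableSet_lt measurable_const measurable_norm),
    ← lintegral_add_left_eq_self _ x]
  congr 1 with z
  simp [Set.indicator, fracKernel, dist_eq_norm]

theorem setLIntegral_prod_mul_left {α β : Type*} [MeasurableSpace α] [MeasurableSpace β]
    {μ : Measure α} {ν : Measure β} [SFinite μ] [SFinite ν] (s : Set α) (t : Set β)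
    {g : α → ℝ≥0∞} {k : α × β → ℝ≥0∞} (hg : Measurable g) (hk : Measurable k) :
    ∫⁻ p in s ×ˢ t, g p.1 * k p ∂μ.prod ν = ∫⁻ x in s, g x * ∫⁻ y in t, k (x, y) ∂ν ∂μ := by
  rw [← Measure.prod_restrict,
    lintegral_prod (fun p => g p.1 * k p) ((hg.comp measurable_fst).mul hk).aemeasurable]
  congr 1 with x
  exact lintegral_const_mul (g x) (hk.comp measurable_prodMk_left :)

/-- Stated with lower integrals because `f` need not be integrable on `B`. -/
theorem setLIntegral_ofReal_le_of_setIntegral_union_nonpos {α : Type*} [MeasurableSpace α]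
    {μ : Measure α} {A B : Set α} {f h : α → ℝ} (hAB : Disjoint A B) (hB : MeasurableSet B)
    (hf : AEStronglyMeasurable f (μ.restrict B)) (hf0 : ∀ x, 0 ≤ f x)
    (hh : IntegrableOn h (A ∪ B) μ) (hh0 : ∫ x in A ∪ B, h x ∂μ ≤ 0)
    (hhA : ∀ᵐ x ∂μ.restrict A, h x = f x) (hhB : ∀ᵐ x ∂μ.restrict B, -f x ≤ h x) :
    ∫⁻ x in A, ENNReal.ofReal (f x) ∂μ ≤ ∫⁻ x in B, ENNReal.ofReal (f x) ∂μ := by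
  rcases eq_top_or_lt_top (∫⁻ x in B, ENNReal.ofReal (f x) ∂μ) with htop | hfin
  · simp [htop]
  have hhA' := hh.mono_set Set.subset_union_left
  have hhB' := hh.mono_set Set.subset_union_right
  have hfB : IntegrableOn f B μ := ⟨hf, (hasFiniteIntegral_iff_ofReal (ae_of_all _ hf0)).2 hfin⟩
  have hfA : IntegrableOn f A μ := hhA'.congr_fun_ae hhA
  have hle : ∫ x in A, f x ∂μ ≤ ∫ x in B, f x ∂μ := by
    have hsplit := setIntegral_union hAB hB hhA' hhB'
    have hA_eq : ∫ x in A, h x ∂μ = ∫ x in A, f x ∂μ := integral_congr_ae hhA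
    have hB_ge : ∫ x in B, -f x ∂μ ≤ ∫ x in B, h x ∂μ := integral_mono_ae hfB.neg hhB' hhB
    rw [integral_neg] at hB_ge
    linarith
  rw [← ofReal_integral_eq_lintegral_ofReal hfA (ae_of_all _ hf0),
    ← ofReal_integral_eq_lintegral_ofReal hfB (ae_of_all _ hf0)]
  exact ENNReal.ofReal_le_ofReal hle

lemma crossQ_eq_union (n : ℕ) (Ω : Set (EuclideanSpace ℝ (Fin n))) :
    crossQ n Ω = Ω ×ˢ Ω ∪ (Ω ×ˢ Ωᶜ ∪ Ωᶜ ×ˢ Ω) := by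
  ext ⟨x, y⟩
  simp only [crossQ, Set.mem_compl_iff, Set.mem_prod, Set.mem_union]
  tauto

theorem setIntegral_prod_compl_nonpos_of_crossQ {n : ℕ} {Ω : Set (EuclideanSpace ℝ (Fin n))}
    {F : EuclideanSpace ℝ (Fin n) × EuclideanSpace ℝ (Fin n) → ℝ} (hΩ : MeasurableSet Ω)
    (hsymm : ∀ x y, F (x, y) = F (y, x)) (hF : IntegrableOn F (crossQ n Ω))
    (hΩΩ : ∀ p ∈ Ω ×ˢ Ω, 0 ≤ F p) (hQ : ∫ p in crossQ n Ω, F p ≤ 0) :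
    ∫ p in Ω ×ˢ Ωᶜ, F p ≤ 0 := by
  rw [crossQ_eq_union] at hF hQ
  have hswap : ∫ p in Ωᶜ ×ˢ Ω, F p = ∫ p in Ω ×ˢ Ωᶜ, F p := by
    rw [Measure.volume_eq_prod, ← setIntegral_prod_swap]
    exact setIntegral_congr_fun (hΩ.prod hΩ.compl) fun p _ => hsymm p.2 p.1
  rw [setIntegral_union (by rw [Set.disjoint_union_right]; constructor <;>
        exact Set.disjoint_prod.2 (by simp [disjoint_compl_right]))
      ((hΩ.prod hΩ.compl).union (hΩ.compl.prod hΩ)) (hF.mono_set Set.subset_union_left)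
      (hF.mono_set Set.subset_union_right),
    setIntegral_union (Set.disjoint_prod.2 (Or.inl disjoint_compl_right)) (hΩ.compl.prod hΩ)
      (hF.mono_set (by intro p; simp +contextual))
      (hF.mono_set (by intro p; simp +contextual)), hswap] at hQ
  linarith [setIntegral_nonneg (μ := volume) (hΩ.prod hΩ) hΩΩ]

/-- Testing `s`-minimality against `u` cut off to zero in `Ω`. -/
theorem SMinimal.setIntegral_prod_compl_nonpos {n : ℕ} {s : ℝ}
    {Ω : Set (EuclideanSpace ℝ (Fin n))} {u : EuclideanSpace ℝ (Fin n) → ℝ}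
    (hΩ : MeasurableSet Ω) (hu : SMinimal n s Ω u) :
    IntegrableOn (fun p => (|u p.1 - u p.2| - |u p.2|) * fracKernel n s p.1 p.2) (Ω ×ˢ Ωᶜ) ∧
      ∫ p in Ω ×ˢ Ωᶜ, (|u p.1 - u p.2| - |u p.2|) * fracKernel n s p.1 p.2 ≤ 0 := by
  set v := Ωᶜ.indicator u
  have hvΩ : ∀ x ∈ Ω, v x = 0 := fun x hx => Set.indicator_of_notMem (not_not.2 hx) u
  have hvW : MemW n s Ω v := by
    refine ⟨hu.1.1.indicator hΩ.compl, ?_⟩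
    rw [setLIntegral_congr_fun (hΩ.prod hΩ) (g := 0) fun p hp => by
      simp [hvΩ _ hp.1, hvΩ _ hp.2]]
    simp
  obtain ⟨hint, hle⟩ := hu.2 v hvW <| by
    filter_upwards [ae_restrict_mem hΩ.compl] with x hx using Set.indicator_of_mem hx u
  have hcut : Set.EqOn (fun p => (|u p.1 - u p.2| - |v p.1 - v p.2|) * fracKernel n s p.1 p.2)
      (fun p => (|u p.1 - u p.2| - |u p.2|) * fracKernel n s p.1 p.2) (Ω ×ˢ Ωᶜ) :=
    fun p hp => by simp [v, hvΩ _ hp.1, Set.indicator_of_mem hp.2]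
  refine ⟨(hint.mono_set (by rw [crossQ_eq_union]; intro p; simp +contextual)).congr_fun
    hcut (hΩ.prod hΩ.compl), ?_⟩
  rw [← setIntegral_congr_fun (hΩ.prod hΩ.compl) hcut]
  refine setIntegral_prod_compl_nonpos_of_crossQ hΩ (fun x y => ?_) hint (fun p hp => ?_) hle
  · rw [abs_sub_comm (u x), abs_sub_comm (v x), fracKernel_comm]
  · simp only [hvΩ _ hp.1, hvΩ _ hp.2, sub_self, abs_zero, sub_zero]
    exact mul_nonneg (abs_nonneg _) (fracKernel_nonneg n s _ _)

theorem SMinimal.lintegral_mul_far_le_near {n : ℕ} {s : ℝ}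
    {Ω S : Set (EuclideanSpace ℝ (Fin n))} {u : EuclideanSpace ℝ (Fin n) → ℝ}
    (hΩ : MeasurableSet Ω) (hS : MeasurableSet S) (hu : SMinimal n s Ω u)
    (hu0 : ∀ᵐ y ∂volume.restrict (Ωᶜ \ S), u y = 0) :
    ∫⁻ x in Ω, ENNReal.ofReal |u x| * ∫⁻ y in Ωᶜ \ S, ENNReal.ofReal (fracKernel n s x y) ≠ ⊤ ∧
      ∫⁻ x in Ω, ENNReal.ofReal |u x| * ∫⁻ y in Ωᶜ \ S, ENNReal.ofReal (fracKernel n s x y)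
        ≤ ∫⁻ x in Ω, ENNReal.ofReal |u x| *
            ∫⁻ y in Ωᶜ ∩ S, ENNReal.ofReal (fracKernel n s x y) := by
  obtain ⟨hint, hle⟩ := hu.setIntegral_prod_compl_nonpos hΩ
  set f := fun p : EuclideanSpace ℝ (Fin n) × EuclideanSpace ℝ (Fin n) =>
    |u p.1| * fracKernel n s p.1 p.2
  have htonelli : ∀ W, ∫⁻ p in Ω ×ˢ W, ENNReal.ofReal (f p)
      = ∫⁻ x in Ω, ENNReal.ofReal |u x| * ∫⁻ y in W, ENNReal.ofReal (fracKernel n s x y) := by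
    intro W
    simp_rw [f, ENNReal.ofReal_mul (abs_nonneg _)]
    exact setLIntegral_prod_mul_left Ω W hu.1.1.abs.ennreal_ofReal
      (measurable_fracKernel n s).ennreal_ofReal
  have hfar : ∀ᵐ p ∂volume.restrict (Ω ×ˢ (Ωᶜ \ S)),
      (|u p.1 - u p.2| - |u p.2|) * fracKernel n s p.1 p.2 = f p := by
    rw [Measure.volume_eq_prod, ← Measure.prod_restrict]
    filter_upwards [Measure.quasiMeasurePreserving_snd.ae hu0] with p hp
    simp [f, hp]
  have hnear : ∀ p : EuclideanSpace ℝ (Fin n) × EuclideanSpace ℝ (Fin n),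
      -f p ≤ (|u p.1 - u p.2| - |u p.2|) * fracKernel n s p.1 p.2 := fun p => by
    rw [← neg_mul]
    refine mul_le_mul_of_nonneg_right ?_ (fracKernel_nonneg n s _ _)
    linarith [abs_sub_abs_le_abs_sub (u p.2) (u p.1), abs_sub_comm (u p.1) (u p.2)]
  rw [← Set.sdiff_union_inter Ωᶜ S, Set.prod_union] at hint hle
  rw [← htonelli, ← htonelli]
  exact ⟨((hint.mono_set Set.subset_union_left).congr_fun_ae hfar).lintegral_lt_top.ne,
    setLIntegral_ofReal_le_of_setIntegral_union_nonpos
      (Set.disjoint_prod.2 (Or.inr Set.disjoint_sdiff_inter)) (hΩ.prod (hΩ.compl.inter hS))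
      ((hu.1.1.comp measurable_fst).abs.mul (measurable_fracKernel n s)).aestronglyMeasurable
      (fun p => mul_nonneg (abs_nonneg _) (fracKernel_nonneg n s _ _)) hint hle
      hfar (ae_of_all _ hnear)⟩

theorem SMinimal.ae_eq_zero_of_kernel_gap {n : ℕ} {s : ℝ}
    {Ω S : Set (EuclideanSpace ℝ (Fin n))} {u : EuclideanSpace ℝ (Fin n) → ℝ}
    (hΩ : MeasurableSet Ω) (hS : MeasurableSet S) (hu : SMinimal n s Ω u)
    (hu0 : ∀ᵐ y ∂volume.restrict (Ωᶜ \ S), u y = 0) {A B : ℝ≥0∞} (hBA : B < A)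
    (hA : ∀ x ∈ Ω, A ≤ ∫⁻ y in Ωᶜ \ S, ENNReal.ofReal (fracKernel n s x y))
    (hB : ∀ x ∈ Ω, ∫⁻ y in Ωᶜ ∩ S, ENNReal.ofReal (fracKernel n s x y) ≤ B) :
    ∀ᵐ x ∂volume.restrict Ω, u x = 0 := by
  obtain ⟨hfar_fin, hfar_le_near⟩ := hu.lintegral_mul_far_le_near hΩ hS hu0
  have hum : Measurable fun x => ENNReal.ofReal |u x| := hu.1.1.abs.ennreal_ofReal
  set m := ∫⁻ x in Ω, ENNReal.ofReal |u x|
  have hlow : m * A ≤ ∫⁻ x in Ω, ENNReal.ofReal |u x| *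
      ∫⁻ y in Ωᶜ \ S, ENNReal.ofReal (fracKernel n s x y) := by
    rw [← lintegral_mul_const _ hum]
    exact setLIntegral_mono' hΩ fun x hx => mul_le_mul_right (hA x hx) _
  have hhigh : ∫⁻ x in Ω, ENNReal.ofReal |u x| *
      ∫⁻ y in Ωᶜ ∩ S, ENNReal.ofReal (fracKernel n s x y) ≤ m * B := by
    rw [← lintegral_mul_const _ hum]
    exact setLIntegral_mono' hΩ fun x hx => mul_le_mul_right (hB x hx) _
  have hm : m = 0 := by
    by_contra hm
    have hm_top : m ≠ ⊤ := fun htop => hfar_fin <| top_le_iff.1 <|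
      (ENNReal.top_mul (pos_of_gt hBA).ne').symm.trans_le (htop ▸ hlow)
    exact ((ENNReal.mul_lt_mul_iff_right hm hm_top).2 hBA).not_ge
      (hlow.trans (hfar_le_near.trans hhigh))
  filter_upwards [(lintegral_eq_zero_iff hum).1 hm] with x hx
  simpa using hx

lemma setOf_lt_dist_subset_compl {X : Type*} [PseudoMetricSpace X] {U : Set X}
    (hU : Bornology.IsBounded U) {x : X} (hx : x ∈ U) {R : ℝ} (hR : Metric.diam U ≤ R) :
    {y | R < dist x y} ⊆ Uᶜ := fun _ hy hyU =>
  (hy.trans_le ((Metric.dist_le_diam_of_mem hU hx hyU).trans hR)).false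

lemma ofReal_div_le_lintegral_fracKernel_tail {n : ℕ} (hn : 0 < n) {s R : ℝ} (hs0 : 0 < s)
    (hs1 : s ≤ 1) (hR : 1 ≤ R) (x : EuclideanSpace ℝ (Fin n)) :
    ENNReal.ofReal (n * volume.real (Metric.ball (0 : EuclideanSpace ℝ (Fin n)) 1) * R⁻¹ / s)
      ≤ ∫⁻ y in {y | R < dist x y}, ENNReal.ofReal (fracKernel n s x y) := by
  rw [lintegral_fracKernel_tail hn hs0 (zero_lt_one.trans_le hR), mul_div_assoc']
  refine ENNReal.ofReal_le_ofReal ?_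
  gcongr
  rw [← Real.rpow_neg_one]
  exact Real.rpow_le_rpow_of_exponent_le hR (by linarith)

lemma setLIntegral_fracKernel_le {n : ℕ} {s δ : ℝ} (hs0 : 0 ≤ s) (hs1 : s ≤ 1) (hδ : 0 < δ)
    (hδ1 : δ ≤ 1) {S : Set (EuclideanSpace ℝ (Fin n))} (hS : MeasurableSet S)
    {x : EuclideanSpace ℝ (Fin n)} (hxS : ∀ y ∈ S, δ ≤ dist x y) :
    ∫⁻ y in S, ENNReal.ofReal (fracKernel n s x y)
      ≤ ENNReal.ofReal (δ ^ (-(n : ℝ) - 1)) * volume S := by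
  rw [← setLIntegral_const]
  exact setLIntegral_mono' hS fun y hy =>
    ENNReal.ofReal_le_ofReal (fracKernel_le_of_le_dist hs0 hs1 hδ hδ1 (hxS y hy))

lemma exists_lt_ofReal_div_of_ne_top {B : ℝ≥0∞} (hB : B ≠ ⊤) {c : ℝ} (hc : 0 < c) :
    ∃ s₀ ∈ Set.Ioo (0 : ℝ) 1, ∀ s ∈ Set.Ioo (0 : ℝ) s₀, B < ENNReal.ofReal (c / s) := by
  have hs₀ := min_le_left (1 / 2 : ℝ) (c / (B.toReal + 1))
  refine ⟨min (1 / 2) (c / (B.toReal + 1)), ⟨by positivity, by linarith⟩, fun s ⟨hs0, hs⟩ => ?_⟩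
  have : s * (B.toReal + 1) < c :=
    (lt_div_iff₀ (by positivity)).1 (hs.trans_le (min_le_right _ _))
  rw [← ENNReal.ofReal_toReal hB, ENNReal.ofReal_lt_ofReal_iff (by positivity), lt_div_iff₀ hs0]
  nlinarith [ENNReal.toReal_nonneg (a := B)]

theorem sMinimal_vanishes_for_small_s_general (n : ℕ) (hn : 0 < n)
    (Ω : Set (EuclideanSpace ℝ (Fin n))) (hΩo : IsOpen Ω) (hΩb : Bornology.IsBounded Ω)
    (δ : ℝ) (hδ : 0 < δ)
    (φ : EuclideanSpace ℝ (Fin n) → ℝ) (hφs : HasCompactSupport φ)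
    (hsupp : tsupport φ ⊆ {x | δ ≤ Metric.infDist x Ω}) :
    ∃ sSmall : ℝ, sSmall ∈ Set.Ioo (0 : ℝ) 1 ∧
      ∀ s ∈ Set.Ioo (0 : ℝ) sSmall,
        ∀ u : EuclideanSpace ℝ (Fin n) → ℝ, SMinimal n s Ω u →
          (∀ᵐ x ∂(volume.restrict Ωᶜ), u x = φ x) →
          ∀ᵐ x ∂(volume.restrict Ω), u x = 0 := by
  set S := tsupport φ
  have hS : MeasurableSet S := (isClosed_tsupport φ).measurableSet
  set R := max 1 (Metric.diam (Ω ∪ S))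
  have hfar : ∀ x ∈ Ω, {y | R < dist x y} ⊆ Ωᶜ \ S := fun x hx => by
    rw [Set.sdiff_eq, ← Set.compl_union]
    exact setOf_lt_dist_subset_compl (hΩb.union hφs.isBounded) (Or.inl hx) (le_max_right 1 _)
  have hnear : ∀ x ∈ Ω, ∀ y ∈ Ωᶜ ∩ S, min δ 1 ≤ dist x y := fun x hx y hy =>
    (min_le_left δ 1).trans <| (hsupp hy.2).trans <|
      (Metric.infDist_le_dist_of_mem hx).trans_eq (dist_comm y x)
  have hball : 0 < volume.real (Metric.ball (0 : EuclideanSpace ℝ (Fin n)) 1) :=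
    have : Nonempty (Fin n) := ⟨⟨0, hn⟩⟩
    ENNReal.toReal_pos (Metric.measure_ball_pos volume 0 one_pos).ne' measure_ball_lt_top.ne
  obtain ⟨s₀, hs₀, hsmall⟩ := exists_lt_ofReal_div_of_ne_top
    (B := ENNReal.ofReal (min δ 1 ^ (-(n : ℝ) - 1)) * volume S)
    (ENNReal.mul_ne_top ENNReal.ofReal_ne_top hφs.measure_lt_top.ne)
    (by positivity : 0 < n * volume.real (Metric.ball (0 : EuclideanSpace ℝ (Fin n)) 1) * R⁻¹)
  refine ⟨s₀, hs₀, fun s hs u hu huφ => ?_⟩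
  have hs1 : s ≤ 1 := (hs.2.trans hs₀.2).le
  refine hu.ae_eq_zero_of_kernel_gap hΩo.measurableSet hS ?_ (hsmall s hs)
    (fun x hx => (ofReal_div_le_lintegral_fracKernel_tail hn hs.1 hs1 (le_max_left 1 _) x).trans
      (lintegral_mono_set (hfar x hx)))
    (fun x hx => (setLIntegral_fracKernel_le hs.1.le hs1 (lt_min hδ one_pos) (min_le_right δ 1)
      (hΩo.measurableSet.compl.inter hS) (hnear x hx)).trans
      (mul_le_mul_right (measure_mono Set.inter_subset_right) _))
  filter_upwards [ae_restrict_of_ae_restrict_of_subset Set.sdiff_subset huφ,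
    ae_restrict_mem (hΩo.measurableSet.compl.diff hS)] with y hy hyS
  rw [hy, image_eq_zero_of_notMem_tsupport hyS.2]

theorem sMinimal_vanishes_for_small_s (n : ℕ) (hn : 0 < n)
    (Ω : Set (EuclideanSpace ℝ (Fin n))) (hΩo : IsOpen Ω) (hΩb : Bornology.IsBounded Ω)
    (hΩc : IsConnected Ω) (hΩ2 : HasC2Boundary n hn Ω)
    (δ : ℝ) (hδ : 0 < δ)
    (φ : EuclideanSpace ℝ (Fin n) → ℝ) (hφc : Continuous φ) (hφs : HasCompactSupport φ)
    (hφ0 : ∀ x, 0 ≤ φ x)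
    (hsupp : tsupport φ ⊆ {x | δ ≤ Metric.infDist x Ω}) :
    ∃ sSmall : ℝ, sSmall ∈ Set.Ioo (0 : ℝ) 1 ∧
      ∀ s ∈ Set.Ioo (0 : ℝ) sSmall,
        ∀ u : EuclideanSpace ℝ (Fin n) → ℝ, SMinimal n s Ω u →
          (∀ᵐ x ∂(volume.restrict Ωᶜ), u x = φ x) →
          ∀ᵐ x ∂(volume.restrict Ω), u x = 0 :=
  sMinimal_vanishes_for_small_s_general n hn Ω hΩo hΩb δ hδ φ hφs hsupp
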